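/- Let a°(·,0), a°(·,ε), a°(·,2ε), … be any sequence in V satisfying a°(·, t+ε) = T(a°(·,t)) for all t ∈ εℤ, t ≥ 0. Then for each x ∈ εℤ and each sign choice ±, the series ∑_{t∈εℤ, t≥0} a°_±(x,t) converges absolutely. -/

import Mathlib

open scoped BigOperators

/-- A step of a light path (in integer lattice coordinates): the vector from `p` to `q`
is cooriented with `(1,1)` or `(-1,1)`; the zero vector counts as cooriented with any vector. -/
def LightStep (p q : ℤ × ℤ) : Prop :=
  p.2 ≤ q.2 ∧ (q.1 - p.1 = q.2 - p.2 ∨ q.1 - p.1 = -(q.2 - p.2))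

/-- A light path on the lattice `εℤ²` (recorded in integer coordinates `(x/ε, t/ε)`):
a nonempty finite sequence of lattice points, each consecutive step cooriented with
`(1,1)` or `(-1,1)`, all points except possibly the first and last lying in the strip
`0 < x ≤ L` (in real coordinates). -/
def IsLightPath (L ε : ℝ) (s : List (ℤ × ℤ)) : Prop :=
  s ≠ [] ∧ s.Chain' LightStep ∧
    ∀ z ∈ s.dropLast.tail, 0 < ε * (z.1 : ℝ) ∧ ε * (z.1 : ℝ) ≤ L

/-- The number of scatterings of a path: points counted with repetitions,
excluding the first and the last. -/
def numScatter (s : List (ℤ × ℤ)) : ℕ := s.length - 2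

/-- The last step of a path, if any: the pair (second-to-last point, last point). -/
def lastStep (s : List (ℤ × ℤ)) : Option ((ℤ × ℤ) × (ℤ × ℤ)) :=
  match s.reverse with
  | q :: r :: _ => some (r, q)
  | _ => none

/-- The last step of `s` is nonzero and cooriented with `(sgn, 1)`. -/
def LastStepDir (sgn : ℤ) (s : List (ℤ × ℤ)) : Prop :=
  ∃ a b : ℤ × ℤ, lastStep s = some (a, b) ∧ a.2 < b.2 ∧ b.1 - a.1 = sgn * (b.2 - a.2)

/-- Light paths from `src` to `dst` whose last step is nonzero and cooriented with `(sgn,1)`. -/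
def PathsDir (L ε : ℝ) (src dst : ℤ × ℤ) (sgn : ℤ) : Type :=
  {s : List (ℤ × ℤ) // IsLightPath L ε s ∧ s.head? = some src ∧ s.getLast? = some dst ∧
    LastStepDir sgn s}

/-- All light paths from `src` to `dst`. -/
def PathsAll (L ε : ℝ) (src dst : ℤ × ℤ) : Type :=
  {s : List (ℤ × ℤ) // IsLightPath L ε s ∧ s.head? = some src ∧ s.getLast? = some dst}

/-- The inner sum `a_±(x,t;τ) = ∑_s (-imε)^{ℓ(s)}` over light paths from `(0,τ)` to `(x,t)`
whose last step is nonzero and cooriented with `(±1,1)`; integer lattice coordinates. -/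
noncomputable def innerAmp (m L ε : ℝ) (sgn : ℤ) (x t τ : ℤ) : ℂ :=
  ∑' s : PathsDir L ε (0, τ) (x, t) sgn, (-(Complex.I * m * ε)) ^ numScatter s.val

/-- The wave function `a_±(x,t) = ∑_{τ<t} e^{iωτ} a_±(x,t;τ)` (real time is `ε·t`). -/
noncomputable def waveFn (ω m L ε : ℝ) (sgn : ℤ) (x t : ℤ) : ℂ :=
  ∑' τ : {τ : ℤ // τ < t},
    Complex.exp (Complex.I * ω * (ε * (τ.val : ℤ))) * innerAmp m L ε sgn x t τ.val

/-- The reflection amplitude `a(ω,m,L,ε)`: sum over all light paths from `(0,τ)` to `(0,0)`,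
`τ < 0`, of `e^{iωτ}(-imε)^{ℓ(s)}`. -/
noncomputable def reflAmp (ω m L ε : ℝ) : ℂ :=
  ∑' τ : {τ : ℤ // τ < 0},
    Complex.exp (Complex.I * ω * (ε * (τ.val : ℤ))) *
      ∑' s : PathsAll L ε (0, τ.val) (0, 0), (-(Complex.I * m * ε)) ^ numScatter s.val

/-- The reflection probability `P(ω,m,L,ε) = |a(ω,m,L,ε)|²`. -/
noncomputable def reflProb (ω m L ε : ℝ) : ℝ := ‖(reflAmp ω m L ε)‖ ^ 2

/-- A checker path: a light path whose every step equals `(ε,ε)` or `(-ε,ε)`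
(i.e. `(±1,1)` in integer coordinates). -/
def IsCheckerPath (L ε : ℝ) (s : List (ℤ × ℤ)) : Prop :=
  IsLightPath L ε s ∧
    s.Chain' fun p q => q.2 - p.2 = 1 ∧ (q.1 - p.1 = 1 ∨ q.1 - p.1 = -1)

/-- The list of steps of a path. -/
def pathSteps (s : List (ℤ × ℤ)) : List (ℤ × ℤ) :=
  (s.zip s.tail).map fun pq => (pq.2.1 - pq.1.1, pq.2.2 - pq.1.2)

/-- The number of turns of a path: pairs of consecutive orthogonal steps. -/
def turns (s : List (ℤ × ℤ)) : ℕ :=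
  (((pathSteps s).zip (pathSteps s).tail).filter
    fun dd => dd.1.1 * dd.2.1 + dd.1.2 * dd.2.2 == 0).length

/-- Checker paths from `src` to `dst` whose last step equals `(sgn·ε, ε)`. -/
def CheckerDir (L ε : ℝ) (src dst : ℤ × ℤ) (sgn : ℤ) : Type :=
  {s : List (ℤ × ℤ) // IsCheckerPath L ε s ∧ s.head? = some src ∧ s.getLast? = some dst ∧
    LastStepDir sgn s}

/-- Membership in the space `V` of functions `a° = (a°₋, a°₊) : εℤ → ℂ²`
vanishing outside `{0, ε, …, (N+1)ε}` where `N = L/ε`; integer coordinates. -/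
def InV (N : ℤ) (a : ℤ → ℂ × ℂ) : Prop :=
  ∀ j : ℤ, j < 0 ∨ N + 1 < j → a j = 0

/-- The transfer matrix `T`: `(b°₋(x-ε), b°₊(x+ε)) = U·(a°₋(x), a°₊(x))` for
`x = ε, …, Nε`, all other values being `0`; here `U = (1/(1+imε))·[[1,-imε],[-imε,1]]`. -/
noncomputable def transferFun (m ε : ℝ) (N : ℤ) (a : ℤ → ℂ × ℂ) : ℤ → ℂ × ℂ := fun j =>
  (if 0 ≤ j ∧ j ≤ N - 1 then
      (1 / (1 + Complex.I * m * ε)) * ((a (j + 1)).1 - Complex.I * m * ε * (a (j + 1)).2)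
    else 0,
   if 2 ≤ j ∧ j ≤ N + 1 then
      (1 / (1 + Complex.I * m * ε)) * (-(Complex.I * m * ε) * (a (j - 1)).1 + (a (j - 1)).2)
    else 0)

/-- The squared Euclidean norm on `V`. -/
noncomputable def vNormSq (N : ℤ) (a : ℤ → ℂ × ℂ) : ℝ :=
  ∑ j ∈ Finset.Icc (0 : ℤ) (N + 1),
    (‖(a j).1‖ ^ 2 + ‖(a j).2‖ ^ 2)

/-! ### Auxiliary development for STATEMENT 9 -/

section Aux

open Finset

/-- The finite-dimensional Euclidean space modelling `V`. -/
abbrev WS (N : ℤ) := EuclideanSpace ℂ (↥(Finset.Icc (0:ℤ) (N+1)) × Bool)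

/-- Read off a function `ℤ → ℂ × ℂ` from a vector in `WS N`. -/
noncomputable def toA (N : ℤ) (w : WS N) : ℤ → ℂ × ℂ := fun j =>
  if h : j ∈ Finset.Icc (0:ℤ) (N+1) then (w (⟨j, h⟩, false), w (⟨j, h⟩, true)) else 0

/-- Encode a function `ℤ → ℂ × ℂ` as a vector in `WS N`. -/
def toW (N : ℤ) (a : ℤ → ℂ × ℂ) : WS N := WithLp.toLp 2 (fun p : (↥(Finset.Icc (0:ℤ) (N+1)) × Bool) => if p.2 then (a p.1.1).2 else (a p.1.1).1)

lemma InV_toA (N : ℤ) (w : WS N) : InV N (toA N w) := by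
  intro j hj
  have : j ∉ Finset.Icc (0:ℤ) (N+1) := by simp only [Finset.mem_Icc]; omega
  simp [toA, this]

lemma toA_toW {N : ℤ} {a : ℤ → ℂ × ℂ} (ha : InV N a) : toA N (toW N a) = a := by
  funext j
  by_cases h : j ∈ Finset.Icc (0:ℤ) (N+1)
  · simp [toA, toW, h]
  · rw [Finset.mem_Icc] at h
    have := ha j (by omega)
    simp only [toA, Finset.mem_Icc]
    rw [dif_neg (by omega)]
    exact this.symm

lemma toW_toA (N : ℤ) (w : WS N) : toW N (toA N w) = w := by
  ext p
  obtain ⟨⟨j, h⟩, b⟩ := p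
  cases b <;> simp [toW, toA, h]

lemma toW_zero (N : ℤ) : toW N (0 : ℤ → ℂ × ℂ) = 0 := by
  ext p; cases p with | mk i b => cases b <;> simp [toW]

lemma InV_transferFun (m ε : ℝ) (N : ℤ) (a : ℤ → ℂ × ℂ) : InV N (transferFun m ε N a) := by
  intro j hj
  simp only [transferFun, Prod.mk_eq_zero]
  constructor <;> rw [if_neg (by omega)]

lemma toA_add (N : ℤ) (u v : WS N) : toA N (u + v) = toA N u + toA N v := by
  funext j
  simp only [toA, Pi.add_apply]
  split_ifs with h
  · simp [Prod.ext_iff, PiLp.add_apply]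
  · simp

lemma toA_smul (N : ℤ) (c : ℂ) (u : WS N) : toA N (c • u) = c • toA N u := by
  funext j
  simp only [toA, Pi.smul_apply]
  split_ifs with h
  · simp [Prod.ext_iff, PiLp.smul_apply]
  · simp

lemma transferFun_add (m ε : ℝ) (N : ℤ) (a b : ℤ → ℂ × ℂ) :
    transferFun m ε N (a + b) = transferFun m ε N a + transferFun m ε N b := by
  funext j
  simp only [transferFun, Pi.add_apply, Prod.ext_iff, Prod.fst_add, Prod.snd_add]
  constructor <;> split_ifs <;> ring

lemma transferFun_smul (m ε : ℝ) (N : ℤ) (c : ℂ) (a : ℤ → ℂ × ℂ) :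
    transferFun m ε N (c • a) = c • transferFun m ε N a := by
  funext j
  simp only [transferFun, Pi.smul_apply, Prod.ext_iff, Prod.smul_fst, Prod.smul_snd, smul_eq_mul]
  constructor <;> split_ifs <;> ring

lemma toW_add (N : ℤ) (a b : ℤ → ℂ × ℂ) : toW N (a + b) = toW N a + toW N b := by
  ext p
  obtain ⟨⟨j, h⟩, s⟩ := p
  cases s <;> simp [toW, PiLp.add_apply]

lemma toW_smul (N : ℤ) (c : ℂ) (a : ℤ → ℂ × ℂ) : toW N (c • a) = c • toW N a := by
  ext p
  obtain ⟨⟨j, h⟩, s⟩ := p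
  cases s <;> simp [toW, PiLp.smul_apply]

/-- The transfer matrix as a linear endomorphism of `WS N`. -/
noncomputable def Tl (m ε : ℝ) (N : ℤ) : WS N →ₗ[ℂ] WS N where
  toFun w := toW N (transferFun m ε N (toA N w))
  map_add' u v := by rw [toA_add, transferFun_add, toW_add]
  map_smul' c u := by rw [toA_smul, transferFun_smul, toW_smul]; rfl

lemma Tl_apply (m ε : ℝ) (N : ℤ) (w : WS N) :
    Tl m ε N w = toW N (transferFun m ε N (toA N w)) := rfl

lemma norm_sq_eq_vNormSq (N : ℤ) (w : WS N) : ‖w‖ ^ 2 = vNormSq N (toA N w) := by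
  rw [EuclideanSpace.norm_eq, Real.sq_sqrt (by positivity)]
  rw [Fintype.sum_prod_type]
  unfold vNormSq
  rw [← Finset.sum_coe_sort (Finset.Icc (0:ℤ) (N+1))
    (fun j => ‖(toA N w j).1‖ ^ 2 + ‖(toA N w j).2‖ ^ 2)]
  refine Finset.sum_congr rfl fun i _ => ?_
  obtain ⟨j, h⟩ := i
  simp [toA, h, add_comm]

lemma one_add_I_ne (m ε : ℝ) : (1 + Complex.I * m * ε) ≠ 0 := by
  intro h
  have := congrArg Complex.re h
  simp [Complex.add_re, Complex.mul_re] at this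

lemma U_norm (m ε : ℝ) (u v : ℂ) :
    ‖((1 / (1 + Complex.I * m * ε)) * (u - Complex.I * m * ε * v))‖ ^ 2 +
      ‖((1 / (1 + Complex.I * m * ε)) * (-(Complex.I * m * ε) * u + v))‖ ^ 2 =
    ‖u‖ ^ 2 + ‖v‖ ^ 2 := by
  have hd : Complex.normSq (1 + Complex.I * m * ε) = 1 + (m * ε) ^ 2 := by
    simp [Complex.normSq_apply]; ring
  have hpos : (0:ℝ) < 1 + (m * ε) ^ 2 := by positivity
  rw [Complex.sq_norm, Complex.sq_norm, Complex.sq_norm, Complex.sq_norm,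
    Complex.normSq_mul, Complex.normSq_mul, one_div, Complex.normSq_inv, hd]
  have hexp : Complex.normSq (u - Complex.I * m * ε * v) +
      Complex.normSq (-(Complex.I * m * ε) * u + v) =
      (1 + (m * ε) ^ 2) * (Complex.normSq u + Complex.normSq v) := by
    simp only [Complex.normSq_apply, Complex.sub_re, Complex.sub_im, Complex.add_re,
      Complex.add_im, Complex.mul_re, Complex.mul_im, Complex.neg_re, Complex.neg_im,
      Complex.I_re, Complex.I_im, Complex.ofReal_re, Complex.ofReal_im, Complex.one_re,
      Complex.one_im]
    ring
  field_simp
  ring_nf at hexp ⊢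
  nlinarith [hexp]

lemma vNormSq_transferFun (m ε : ℝ) (N : ℤ) (hN1 : 1 ≤ N) (a : ℤ → ℂ × ℂ) :
    vNormSq N (transferFun m ε N a) =
      vNormSq N a - (‖(a 0).1‖ ^ 2 + ‖(a 0).2‖ ^ 2)
        - (‖(a (N+1)).1‖ ^ 2 + ‖(a (N+1)).2‖ ^ 2) := by
  have key : vNormSq N (transferFun m ε N a) =
      ∑ x ∈ Finset.Icc (1:ℤ) N, (‖(a x).1‖ ^ 2 + ‖(a x).2‖ ^ 2) := by
    unfold vNormSq transferFun
    rw [Finset.sum_add_distrib]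
    have e1 : ∑ j ∈ Finset.Icc (0:ℤ) (N+1),
        ‖(if 0 ≤ j ∧ j ≤ N - 1 then
          (1 / (1 + Complex.I * m * ε)) * ((a (j+1)).1 - Complex.I * m * ε * (a (j+1)).2)
          else 0)‖ ^ 2 =
        ∑ x ∈ Finset.Icc (1:ℤ) N,
          ‖((1 / (1 + Complex.I * m * ε)) *
            ((a x).1 - Complex.I * m * ε * (a x).2))‖ ^ 2 := by
      simp only [apply_ite (fun z : ℂ => ‖z‖ ^ 2), map_zero, norm_zero,
        ne_eq, OfNat.ofNat_ne_zero, not_false_eq_true, zero_pow]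
      rw [← Finset.sum_filter]
      have hf : (Finset.Icc (0:ℤ) (N+1)).filter (fun j => 0 ≤ j ∧ j ≤ N - 1)
          = Finset.Icc (0:ℤ) (N-1) := by
        ext j; simp only [Finset.mem_filter, Finset.mem_Icc]; omega
      rw [hf]
      have hmap : Finset.Icc (1:ℤ) N
          = (Finset.Icc (0:ℤ) (N-1)).map (addRightEmbedding 1) := by
        rw [Finset.map_add_right_Icc]; norm_num
      rw [hmap, Finset.sum_map]
      rfl
    have e2 : ∑ j ∈ Finset.Icc (0:ℤ) (N+1),
        ‖(if 2 ≤ j ∧ j ≤ N + 1 then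
          (1 / (1 + Complex.I * m * ε)) * (-(Complex.I * m * ε) * (a (j-1)).1 + (a (j-1)).2)
          else 0)‖ ^ 2 =
        ∑ x ∈ Finset.Icc (1:ℤ) N,
          ‖((1 / (1 + Complex.I * m * ε)) *
            (-(Complex.I * m * ε) * (a x).1 + (a x).2))‖ ^ 2 := by
      simp only [apply_ite (fun z : ℂ => ‖z‖ ^ 2), map_zero, norm_zero,
        ne_eq, OfNat.ofNat_ne_zero, not_false_eq_true, zero_pow]
      rw [← Finset.sum_filter]
      have hf : (Finset.Icc (0:ℤ) (N+1)).filter (fun j => 2 ≤ j ∧ j ≤ N + 1)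
          = Finset.Icc (2:ℤ) (N+1) := by
        ext j; simp only [Finset.mem_filter, Finset.mem_Icc]; omega
      rw [hf]
      have hmap : Finset.Icc (2:ℤ) (N+1)
          = (Finset.Icc (1:ℤ) N).map (addRightEmbedding 1) := by
        rw [Finset.map_add_right_Icc]; norm_num
      rw [hmap, Finset.sum_map]
      refine Finset.sum_congr rfl fun x _ => ?_
      have : (addRightEmbedding (1:ℤ)) x - 1 = x := by
        simp [addRightEmbedding]
      rw [this]
    rw [e1, e2, ← Finset.sum_add_distrib]
    exact Finset.sum_congr rfl fun x _ => U_norm m ε (a x).1 (a x).2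
  have hsplit : Finset.Icc (0:ℤ) (N+1) = insert 0 (insert (N+1) (Finset.Icc (1:ℤ) N)) := by
    ext j; simp only [Finset.mem_insert, Finset.mem_Icc]; omega
  have h0 : (0:ℤ) ∉ insert (N+1) (Finset.Icc (1:ℤ) N) := by
    simp only [Finset.mem_insert, Finset.mem_Icc]; omega
  have h1 : (N+1:ℤ) ∉ Finset.Icc (1:ℤ) N := by
    simp only [Finset.mem_Icc]; omega
  rw [key]
  conv_rhs => rw [vNormSq, hsplit, Finset.sum_insert h0, Finset.sum_insert h1]
  ring

lemma normTl_sq (m ε : ℝ) (N : ℤ) (hN1 : 1 ≤ N) (w : WS N) :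
    ‖Tl m ε N w‖ ^ 2 =
      ‖w‖ ^ 2 - (‖(toA N w 0).1‖ ^ 2 + ‖(toA N w 0).2‖ ^ 2)
        - (‖(toA N w (N+1)).1‖ ^ 2 + ‖(toA N w (N+1)).2‖ ^ 2) := by
  rw [norm_sq_eq_vNormSq, Tl_apply, toA_toW (InV_transferFun m ε N (toA N w)),
    vNormSq_transferFun m ε N hN1, norm_sq_eq_vNormSq]

lemma norm_Tl_le (m ε : ℝ) (N : ℤ) (hN1 : 1 ≤ N) (w : WS N) : ‖Tl m ε N w‖ ≤ ‖w‖ := by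
  have h := normTl_sq m ε N hN1 w
  nlinarith [norm_nonneg (Tl m ε N w), norm_nonneg w,
    norm_nonneg (toA N w 0).1, norm_nonneg (toA N w 0).2,
    norm_nonneg (toA N w (N+1)).1, norm_nonneg (toA N w (N+1)).2,
    sq_nonneg (‖(toA N w 0).1‖), sq_nonneg (‖(toA N w 0).2‖),
    sq_nonneg (‖(toA N w (N+1)).1‖), sq_nonneg (‖(toA N w (N+1)).2‖)]

end Aux



section Aux2

lemma abs_eigen_lt_one (m ε : ℝ) (N : ℤ) (hN1 : 1 ≤ N)
    {lam : ℂ} {v : WS N} (hv : v ≠ 0) (heig : Tl m ε N v = lam • v) :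
    ‖lam‖ < 1 := by
  by_contra hge
  push_neg at hge
  have hnv : 0 < ‖v‖ := norm_pos_iff.mpr hv
  have hid := normTl_sq m ε N hN1 v
  rw [heig, norm_smul] at hid
  have hge' : (1:ℝ) ≤ ‖lam‖ := by exact hge
  have hsq : ‖v‖ ^ 2 ≤ (‖lam‖ * ‖v‖) ^ 2 := by
    nlinarith [norm_nonneg v, norm_nonneg lam, sq_nonneg ‖v‖,
      mul_nonneg (norm_nonneg lam) (sq_nonneg ‖v‖)]
  set s0a := ‖(toA N v 0).1‖ with hs0a
  set s0b := ‖(toA N v 0).2‖ with hs0b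
  set s1a := ‖(toA N v (N+1)).1‖ with hs1a
  set s1b := ‖(toA N v (N+1)).2‖ with hs1b
  have e0a : s0a ^ 2 = 0 := by
    linarith [hid, hsq, sq_nonneg s0a, sq_nonneg s0b, sq_nonneg s1a, sq_nonneg s1b]
  have e0b : s0b ^ 2 = 0 := by
    linarith [hid, hsq, sq_nonneg s0a, sq_nonneg s0b, sq_nonneg s1a, sq_nonneg s1b]
  have e1a : s1a ^ 2 = 0 := by
    linarith [hid, hsq, sq_nonneg s0a, sq_nonneg s0b, sq_nonneg s1a, sq_nonneg s1b]
  have e1b : s1b ^ 2 = 0 := by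
    linarith [hid, hsq, sq_nonneg s0a, sq_nonneg s0b, sq_nonneg s1a, sq_nonneg s1b]
  have a0 : toA N v 0 = 0 :=
    Prod.ext (norm_eq_zero.mp (sq_eq_zero_iff.mp e0a))
      (norm_eq_zero.mp (sq_eq_zero_iff.mp e0b))
  have aN : toA N v (N+1) = 0 :=
    Prod.ext (norm_eq_zero.mp (sq_eq_zero_iff.mp e1a))
      (norm_eq_zero.mp (sq_eq_zero_iff.mp e1b))
  have hlam0 : lam ≠ 0 := by
    intro h; rw [h] at hge; norm_num at hge
  have htrans : transferFun m ε N (toA N v) = lam • toA N v := by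
    have h := congrArg (toA N) heig
    rw [Tl_apply, toA_toW (InV_transferFun m ε N (toA N v)), toA_smul] at h
    exact h
  set a : ℤ → ℂ × ℂ := toA N v with ha
  have hcne : (1 + Complex.I * m * ε) ≠ 0 := one_add_I_ne m ε
  have key : ∀ n : ℕ, (n : ℤ) ≤ N + 1 → a (n : ℤ) = 0 := by
    intro n
    induction n with
    | zero => intro _; exact a0
    | succ k ih =>
      intro hkN
      have hcast : ((k+1 : ℕ) : ℤ) = (k : ℤ) + 1 := by push_cast; ring
      rw [hcast] at hkN ⊢
      have hak := ih (by omega)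
      by_cases htop : (k:ℤ) + 1 = N + 1
      · rw [htop]; exact aN
      · have hk2 : (k:ℤ) + 1 ≤ N := by omega
        have h2 : (a ((k:ℤ)+1)).2 = 0 := by
          have hc := congrArg Prod.snd (congrFun htrans ((k:ℤ)+1))
          simp only [transferFun, Pi.smul_apply, Prod.smul_snd, smul_eq_mul] at hc
          rw [show (k:ℤ) + 1 - 1 = (k:ℤ) by ring, hak] at hc
          have hz : lam * (a ((k:ℤ)+1)).2 = 0 := by
            rw [← hc]; split_ifs <;> simp
          exact (mul_eq_zero.mp hz).resolve_left hlam0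
        have h1 : (a ((k:ℤ)+1)).1 = 0 := by
          have hc := congrArg Prod.fst (congrFun htrans (k:ℤ))
          simp only [transferFun, Pi.smul_apply, Prod.smul_fst, smul_eq_mul] at hc
          rw [if_pos ⟨Int.natCast_nonneg k, by omega⟩, hak, h2] at hc
          simp only [Prod.fst_zero, mul_zero, sub_zero] at hc
          rcases mul_eq_zero.mp hc with h | h
          · exact absurd h (one_div_ne_zero hcne)
          · exact h
        exact Prod.ext h1 h2
  have hazero : a = 0 := by
    funext j
    by_cases hj : 0 ≤ j ∧ j ≤ N + 1
    · have h := key j.toNat (by omega)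
      rwa [Int.toNat_of_nonneg hj.1] at h
    · exact InV_toA N v j (by omega)
  exact hv (by rw [← toW_toA N v, ← ha, hazero, toW_zero])

end Aux2

section Aux3

/-- The transfer matrix as a continuous linear endomorphism. -/
noncomputable def Tc (m ε : ℝ) (N : ℤ) : WS N →L[ℂ] WS N :=
  LinearMap.toContinuousLinearMap (Tl m ε N)

lemma Tc_apply (m ε : ℝ) (N : ℤ) (w : WS N) : Tc m ε N w = Tl m ε N w := rfl

lemma spec_lt_one (m ε : ℝ) (N : ℤ) (hN1 : 1 ≤ N) :
    ∀ z ∈ spectrum ℂ (Tc m ε N), ‖z‖₊ < 1 := by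
  intro z hz
  by_cases hinj : Function.Injective (algebraMap ℂ (WS N →L[ℂ] WS N) z - Tc m ε N)
  · exfalso
    apply spectrum.mem_iff.mp hz
    set f := algebraMap ℂ (WS N →L[ℂ] WS N) z - Tc m ε N with hfdef
    have hbij : Function.Bijective ((f : WS N →ₗ[ℂ] WS N)) :=
      ⟨hinj, LinearMap.injective_iff_surjective.mp hinj⟩
    let e := LinearEquiv.ofBijective ((f : WS N →ₗ[ℂ] WS N)) hbij
    let ec := LinearEquiv.toContinuousLinearEquiv e
    have hfe : ∀ x, f x = ec x := fun x => rfl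
    have hval : f * (ec.symm : WS N →L[ℂ] WS N) = 1 := by
      ext w
      simp only [ContinuousLinearMap.mul_apply, ContinuousLinearMap.one_apply,
        ContinuousLinearEquiv.coe_coe]
      rw [hfe (ec.symm w), ContinuousLinearEquiv.apply_symm_apply]
    have hval2 : (ec.symm : WS N →L[ℂ] WS N) * f = 1 := by
      ext w
      simp only [ContinuousLinearMap.mul_apply, ContinuousLinearMap.one_apply,
        ContinuousLinearEquiv.coe_coe]
      rw [hfe w, ContinuousLinearEquiv.symm_apply_apply]
    exact ⟨⟨f, (ec.symm : WS N →L[ℂ] WS N), hval, hval2⟩, rfl⟩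
  · rw [Function.not_injective_iff] at hinj
    obtain ⟨x, y, hxy, hne⟩ := hinj
    have hv : x - y ≠ 0 := sub_ne_zero.mpr hne
    have h0 : (algebraMap ℂ (WS N →L[ℂ] WS N) z - Tc m ε N) (x - y) = 0 := by
      rw [map_sub, hxy, sub_self]
    have heig : Tl m ε N (x - y) = z • (x - y) := by
      simp only [ContinuousLinearMap.sub_apply, Algebra.algebraMap_eq_smul_one,
        ContinuousLinearMap.smul_apply, ContinuousLinearMap.one_apply, sub_eq_zero] at h0
      rw [← Tc_apply, h0]
    have habs := abs_eigen_lt_one m ε N hN1 hv heig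
    rw [← NNReal.coe_lt_coe]
    simpa [coe_nnnorm] using habs

lemma exists_geometric_bound (m ε : ℝ) (N : ℤ) (hN1 : 1 ≤ N) :
    ∃ (c : ℝ) (K : ℕ), 0 ≤ c ∧ c < 1 ∧ ∀ k : ℕ, K ≤ k → ‖(Tc m ε N) ^ k‖ ≤ c ^ k := by
  have hmem : (0:ℤ) ∈ Finset.Icc (0:ℤ) (N+1) := by simp only [Finset.mem_Icc]; omega
  set i0 : (↥(Finset.Icc (0:ℤ) (N+1)) × Bool) := (⟨0, hmem⟩, false) with hi0
  haveI : Nontrivial (WS N) := by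
    refine ⟨EuclideanSpace.single i0 (1:ℂ), 0, fun h => one_ne_zero (α := ℂ) ?_⟩
    have := congrArg (fun v : WS N => v i0) h
    simpa [EuclideanSpace.single_apply] using this
  haveI : Nontrivial (WS N →L[ℂ] WS N) := by
    refine ⟨1, 0, fun h => ?_⟩
    obtain ⟨u, v, huv⟩ := exists_pair_ne (WS N)
    have h1 : (1 : WS N →L[ℂ] WS N) u = (0 : WS N →L[ℂ] WS N) u := by rw [h]
    have h2 : (1 : WS N →L[ℂ] WS N) v = (0 : WS N →L[ℂ] WS N) v := by rw [h]
    simp only [ContinuousLinearMap.one_apply, ContinuousLinearMap.zero_apply] at h1 h2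
    exact huv (h1.trans h2.symm)
  have hrad : spectralRadius ℂ (Tc m ε N) < 1 := by
    have h := spectrum.spectralRadius_lt_of_forall_lt (Tc m ε N) (spec_lt_one m ε N hN1)
    simpa using h
  obtain ⟨c, hc1, hc2⟩ := ENNReal.lt_iff_exists_nnreal_btwn.mp hrad
  have hgel := spectrum.pow_nnnorm_pow_one_div_tendsto_nhds_spectralRadius (Tc m ε N)
  have hev : ∀ᶠ n : ℕ in Filter.atTop,
      (‖(Tc m ε N) ^ n‖₊ : ENNReal) ^ (1/(n:ℝ)) < (c : ENNReal) :=
    hgel.eventually_lt_const hc1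
  obtain ⟨K, hK⟩ := Filter.eventually_atTop.mp hev
  have hc2' : (c:ℝ) < 1 := by exact_mod_cast hc2
  refine ⟨c, max K 1, c.coe_nonneg, hc2', ?_⟩
  intro k hk
  have hkK : K ≤ k := le_trans (le_max_left _ _) hk
  have hk1 : 1 ≤ k := le_trans (le_max_right _ _) hk
  have h := (hK k hkK).le
  have hkne : ((k:ℝ)) ≠ 0 := Nat.cast_ne_zero.mpr (by omega)
  have h2 : (((‖(Tc m ε N) ^ k‖₊ : ENNReal) ^ (1/(k:ℝ))) ^ (k:ℝ)) ≤ ((c : ENNReal)) ^ (k:ℝ) :=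
    ENNReal.rpow_le_rpow h (by positivity)
  rw [← ENNReal.rpow_mul, one_div_mul_cancel hkne, ENNReal.rpow_one,
    ENNReal.rpow_natCast, ← ENNReal.coe_pow, ENNReal.coe_le_coe] at h2
  calc ‖(Tc m ε N) ^ k‖ = ((‖(Tc m ε N) ^ k‖₊ : ℝ)) := (coe_nnnorm _).symm
    _ ≤ ((c ^ k : NNReal) : ℝ) := by exact_mod_cast h2
    _ = (c:ℝ) ^ k := by push_cast; ring

lemma coord_le_norm (N : ℤ) (a : ℤ → ℂ × ℂ) (ha : InV N a) (x : ℤ) :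
    ‖(a x).1‖ ≤ ‖toW N a‖ ∧ ‖(a x).2‖ ≤ ‖toW N a‖ := by
  by_cases hx : x ∈ Finset.Icc (0:ℤ) (N+1)
  · have h1 : ∀ b : Bool, ‖toW N a (⟨x, hx⟩, b)‖ ≤ ‖toW N a‖ := by
      intro b
      have hsq : ‖toW N a (⟨x, hx⟩, b)‖ ^ 2 ≤ ‖toW N a‖ ^ 2 := by
        rw [EuclideanSpace.norm_eq, Real.sq_sqrt (by positivity)]
        exact Finset.single_le_sum (f := fun p => ‖toW N a p‖ ^ 2)
          (fun p _ => by positivity) (Finset.mem_univ _)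
      nlinarith [norm_nonneg (toW N a (⟨x, hx⟩, b)), norm_nonneg (toW N a)]
    constructor
    · simpa [toW] using h1 false
    · simpa [toW] using h1 true
  · rw [Finset.mem_Icc] at hx
    rw [ha x (by omega)]
    simpa using norm_nonneg (toW N a)

end Aux3

/-- For any sequence `a°(·,0), a°(·,ε), …` in `V` with
`a°(·,t+ε) = T(a°(·,t))`, the series `∑_{t≥0} a°_±(x,t)` converges absolutely
for each `x` and each sign. -/
theorem transfer_iterates_summable (ω m L ε : ℝ) (hω : 0 < ω) (hm : 0 < m) (hL : 0 < L)
    (hε : 0 < ε) (hmε : m * ε < 1) (N : ℤ) (hN : L = N * ε)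
    (A : ℕ → ℤ → ℂ × ℂ) (hA : ∀ k, InV N (A k))
    (hstep : ∀ k, A (k + 1) = transferFun m ε N (A k)) (x : ℤ) :
    Summable (fun k : ℕ => ‖(A k x).1‖) ∧ Summable (fun k : ℕ => ‖(A k x).2‖) := by
  have hN0 : (0:ℝ) < (N:ℝ) := by nlinarith
  have hN1 : (1:ℤ) ≤ N := by
    have : (0:ℤ) < N := by exact_mod_cast hN0
    omega
  obtain ⟨c, K, hc0, hc1, hgeom⟩ := exists_geometric_bound m ε N hN1
  set w0 := toW N (A 0) with hw0
  have hiter : ∀ k : ℕ, toW N (A k) = ((Tc m ε N) ^ k) w0 := by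
    intro k
    induction k with
    | zero => simp [hw0]
    | succ k ih =>
      have hTc : toW N (transferFun m ε N (A k)) = Tc m ε N (toW N (A k)) := by
        rw [Tc_apply, Tl_apply, toA_toW (hA k)]
      rw [hstep k, hTc, ih, ← ContinuousLinearMap.mul_apply, ← pow_succ']
  have hbound : ∀ k : ℕ, K ≤ k → ‖toW N (A k)‖ ≤ c ^ k * ‖w0‖ := by
    intro k hk
    rw [hiter k]
    calc ‖((Tc m ε N) ^ k) w0‖ ≤ ‖(Tc m ε N) ^ k‖ * ‖w0‖ := ContinuousLinearMap.le_opNorm _ _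
      _ ≤ c ^ k * ‖w0‖ := mul_le_mul_of_nonneg_right (hgeom k hk) (norm_nonneg _)
  have hsum : ∀ f : ℕ → ℝ, (∀ k, 0 ≤ f k) → (∀ k, K ≤ k → f k ≤ c ^ k * ‖w0‖) → Summable f := by
    intro f hf0 hfle
    rw [← summable_nat_add_iff K]
    have hg : Summable (fun n : ℕ => c ^ (n + K) * ‖w0‖) := by
      simp_rw [pow_add]
      exact ((summable_geometric_of_lt_one hc0 hc1).mul_right _).mul_right _
    exact hg.of_nonneg_of_le (fun n => hf0 _) (fun n => hfle (n + K) (by omega))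
  constructor
  · refine hsum _ (fun k => norm_nonneg _) (fun k hk => ?_)
    exact le_trans (coord_le_norm N (A k) (hA k) x).1 (hbound k hk)
  · refine hsum _ (fun k => norm_nonneg _) (fun k hk => ?_)
    exact le_trans (coord_le_norm N (A k) (hA k) x).2 (hbound k hk)
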